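/- arXiv:math/0408045 — 2 statements merged into one kernel-verified Lean document; each statement's English description precedes it below -/
import Mathlib

section
/- Let T be a finite double groupoid with core groupoid D (boxes with identity left and bottom sides). If two points P, Q of the base are connected by an arrow of D, then θ(P) = θ(Q), where θ(P) is the number of boxes whose left and bottom sides are both identities at P. -/
/-- A (finite) groupoid, presented algebraically: a set `A` of arrows over a base `P`,
with source `s`, target `e`, identities, a (total, junk-valued when undefined)
composition, and inverses. Composition is written left to right: `comp a b` is
defined when `e a = s b`. -/
structure Gpd (P : Type) (A : Type) where
  s : A → P
  e : A → P
  id : P → A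
  comp : A → A → A
  inv : A → A
  s_id : ∀ p, s (id p) = p
  e_id : ∀ p, e (id p) = p
  s_comp : ∀ a b, e a = s b → s (comp a b) = s a
  e_comp : ∀ a b, e a = s b → e (comp a b) = e b
  id_comp : ∀ a, comp (id (s a)) a = a
  comp_id : ∀ a, comp a (id (e a)) = a
  comp_assoc : ∀ a b c, e a = s b → e b = s c →
    comp (comp a b) c = comp a (comp b c)
  s_inv : ∀ a, s (inv a) = e a
  e_inv : ∀ a, e (inv a) = s a
  inv_comp : ∀ a, comp (inv a) a = id (e a)
  comp_inv : ∀ a, comp a (inv a) = id (s a)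

/-- A finite double groupoid: boxes `B`, horizontal arrows `H`, vertical arrows `V`,
points `P`; boxes carry a horizontal groupoid structure over `V`
(source = left side, target = right side) and a vertical groupoid structure over `H`
(source = top side, target = bottom side), compatible with the side groupoids,
satisfying the interchange law. -/
structure DoubleGroupoid where
  P : Type
  H : Type
  V : Type
  B : Type
  [fP : Fintype P]
  [fH : Fintype H]
  [fV : Fintype V]
  [fB : Fintype B]
  [dP : DecidableEq P]
  [dH : DecidableEq H]
  [dV : DecidableEq V]
  [dB : DecidableEq B]
  /-- horizontal arrows: source `s` = left point, target `e` = right point -/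
  gH : Gpd P H
  /-- vertical arrows: source `s` = top point, target `e` = bottom point -/
  gV : Gpd P V
  /-- horizontal composition of boxes; base `V`, source = left side, target = right side -/
  gBh : Gpd V B
  /-- vertical composition of boxes; base `H`, source = top side, target = bottom side -/
  gBv : Gpd H B
  corner_tl : ∀ A, gH.s (gBv.s A) = gV.s (gBh.s A)
  corner_tr : ∀ A, gH.e (gBv.s A) = gV.s (gBh.e A)
  corner_bl : ∀ A, gH.s (gBv.e A) = gV.e (gBh.s A)
  corner_br : ∀ A, gH.e (gBv.e A) = gV.e (gBh.e A)
  t_hcomp : ∀ A B, gBh.e A = gBh.s B →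
    gBv.s (gBh.comp A B) = gH.comp (gBv.s A) (gBv.s B)
  b_hcomp : ∀ A B, gBh.e A = gBh.s B →
    gBv.e (gBh.comp A B) = gH.comp (gBv.e A) (gBv.e B)
  l_vcomp : ∀ A B, gBv.e A = gBv.s B →
    gBh.s (gBv.comp A B) = gV.comp (gBh.s A) (gBh.s B)
  r_vcomp : ∀ A B, gBv.e A = gBv.s B →
    gBh.e (gBv.comp A B) = gV.comp (gBh.e A) (gBh.e B)
  t_idh : ∀ g, gBv.s (gBh.id g) = gH.id (gV.s g)
  b_idh : ∀ g, gBv.e (gBh.id g) = gH.id (gV.e g)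
  l_idv : ∀ x, gBh.s (gBv.id x) = gV.id (gH.s x)
  r_idv : ∀ x, gBh.e (gBv.id x) = gV.id (gH.e x)
  t_hinv : ∀ A, gBv.s (gBh.inv A) = gH.inv (gBv.s A)
  b_hinv : ∀ A, gBv.e (gBh.inv A) = gH.inv (gBv.e A)
  l_vinv : ∀ A, gBh.s (gBv.inv A) = gV.inv (gBh.s A)
  r_vinv : ∀ A, gBh.e (gBv.inv A) = gV.inv (gBh.e A)
  hinv_vinv : ∀ A, gBh.inv (gBv.inv A) = gBv.inv (gBh.inv A)
  idh_vcomp : ∀ g h, gV.e g = gV.s h →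
    gBv.comp (gBh.id g) (gBh.id h) = gBh.id (gV.comp g h)
  idv_hcomp : ∀ x y, gH.e x = gH.s y →
    gBh.comp (gBv.id x) (gBv.id y) = gBv.id (gH.comp x y)
  id_id : ∀ p, gBh.id (gV.id p) = gBv.id (gH.id p)
  interchange : ∀ A B C D,
    gBh.e A = gBh.s B → gBh.e C = gBh.s D →
    gBv.e A = gBv.s C → gBv.e B = gBv.s D →
    gBv.comp (gBh.comp A B) (gBh.comp C D) =
      gBh.comp (gBv.comp A C) (gBv.comp B D)

namespace DoubleGroupoid

instance (T : DoubleGroupoid) : Fintype T.P := T.fP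
instance (T : DoubleGroupoid) : Fintype T.H := T.fH
instance (T : DoubleGroupoid) : Fintype T.V := T.fV
instance (T : DoubleGroupoid) : Fintype T.B := T.fB
instance (T : DoubleGroupoid) : DecidableEq T.P := T.dP
instance (T : DoubleGroupoid) : DecidableEq T.H := T.dH
instance (T : DoubleGroupoid) : DecidableEq T.V := T.dV
instance (T : DoubleGroupoid) : DecidableEq T.B := T.dB

variable (T : DoubleGroupoid)

/-- top side of a box -/
def top (A : T.B) : T.H := T.gBv.s A
/-- bottom side of a box -/
def bot (A : T.B) : T.H := T.gBv.e A
/-- left side of a box -/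
def left (A : T.B) : T.V := T.gBh.s A
/-- right side of a box -/
def right (A : T.B) : T.V := T.gBh.e A

/-- horizontal composition -/
def hcomp (A B : T.B) : T.B := T.gBh.comp A B
/-- vertical composition ("A over B") -/
def vcomp (A B : T.B) : T.B := T.gBv.comp A B
/-- horizontal inverse -/
def hinv (A : T.B) : T.B := T.gBh.inv A
/-- vertical inverse -/
def vinv (A : T.B) : T.B := T.gBv.inv A
/-- total inverse `A⁻¹ = (Aʰ)ᵛ` -/
def tinv (A : T.B) : T.B := T.gBv.inv (T.gBh.inv A)

/-- top-left vertex -/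
def tl (A : T.B) : T.P := T.gH.s (T.top A)
/-- top-right vertex -/
def tr (A : T.B) : T.P := T.gH.e (T.top A)
/-- bottom-left vertex -/
def bl (A : T.B) : T.P := T.gH.s (T.bot A)
/-- bottom-right vertex -/
def br (A : T.B) : T.P := T.gH.e (T.bot A)
/-- right-top vertex (equal to `tr` by the corner compatibilities) -/
def rt (A : T.B) : T.P := T.gV.s (T.right A)
/-- right-bottom vertex -/
def rb (A : T.B) : T.P := T.gV.e (T.right A)
/-- left-top vertex -/
def lt (A : T.B) : T.P := T.gV.s (T.left A)
/-- left-bottom vertex -/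
def lb (A : T.B) : T.P := T.gV.e (T.left A)

/-- upper-left corner function: number of boxes with the same left and top sides -/
noncomputable def ulc (A : T.B) : ℕ :=
  Nat.card {U : T.B // T.left U = T.left A ∧ T.top U = T.top A}
/-- upper-right corner function: number of boxes with the same right and top sides -/
noncomputable def urc (A : T.B) : ℕ :=
  Nat.card {U : T.B // T.right U = T.right A ∧ T.top U = T.top A}
/-- lower-left corner function: number of boxes with the same left and bottom sides -/
noncomputable def llc (A : T.B) : ℕ :=
  Nat.card {U : T.B // T.left U = T.left A ∧ T.bot U = T.bot A}
/-- lower-right corner function: number of boxes with the same right and bottom sides -/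
noncomputable def lrc (A : T.B) : ℕ :=
  Nat.card {U : T.B // T.right U = T.right A ∧ T.bot U = T.bot A}

/-- the double identity box `Θ_P` at a point -/
def thetaBox (p : T.P) : T.B := T.gBv.id (T.gH.id p)

/-- the filling condition: every compatible pair (right side, top side) bounds a box -/
def Filling : Prop :=
  ∀ (g : T.V) (x : T.H), T.gH.e x = T.gV.s g →
    ∃ A : T.B, T.top A = x ∧ T.right A = g

/-- membership in the core groupoid `D`: the left and bottom sides are identities -/
def isCoreD (D : T.B) : Prop :=
  T.left D = T.gV.id (T.gV.s (T.left D)) ∧ T.bot D = T.gH.id (T.gH.s (T.bot D))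

/-- membership in the core groupoid `E`: the right and top sides are identities -/
def isCoreE (E : T.B) : Prop :=
  T.right E = T.gV.id (T.gV.s (T.right E)) ∧ T.top E = T.gH.id (T.gH.s (T.top E))

/-- `θ(p)`: the number of boxes whose left and bottom sides are identities at `p` -/
noncomputable def thetaLB (p : T.P) : ℕ :=
  Nat.card {U : T.B // T.left U = T.gV.id p ∧ T.bot U = T.gH.id p}

end DoubleGroupoid


namespace Gpd
variable {P A : Type} (G : Gpd P A)

theorem inv_id (p : P) : G.inv (G.id p) = G.id p := by
  have h1 := G.comp_id (G.inv (G.id p))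
  rw [G.e_inv, G.s_id] at h1
  have h2 := G.inv_comp (G.id p)
  rw [G.e_id] at h2
  exact h1.symm.trans h2

theorem id_comp_id (p : P) : G.comp (G.id p) (G.id p) = G.id p := by
  have := G.id_comp (G.id p)
  rwa [G.s_id] at this

theorem cancel_left (a b : A) (h : G.e a = G.s b) :
    G.comp (G.inv a) (G.comp a b) = b := by
  rw [← G.comp_assoc (G.inv a) a b (by rw [G.e_inv]) h, G.inv_comp, h, G.id_comp]

theorem cancel_right (a b : A) (h : G.e a = G.s b) :
    G.comp (G.comp a b) (G.inv b) = a := by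
  rw [G.comp_assoc a b (G.inv b) h (by rw [G.s_inv]), G.comp_inv, ← h, G.comp_id]

theorem cancel_left' (a b : A) (h : G.s a = G.s b) :
    G.comp a (G.comp (G.inv a) b) = b := by
  rw [← G.comp_assoc a (G.inv a) b (by rw [G.s_inv]) (by rw [G.e_inv, h]), G.comp_inv, h, G.id_comp]

theorem cancel_right' (a b : A) (h : G.e a = G.e b) :
    G.comp (G.comp a (G.inv b)) b = a := by
  rw [G.comp_assoc a (G.inv b) b (by rw [G.s_inv, h]) (by rw [G.e_inv]), G.inv_comp, ← h, G.comp_id]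

end Gpd

/-- if two base points `p`, `q` are connected by an arrow of the core
groupoid `D` (a box with identity left and bottom sides, with source `rt` and target
`lt`), then `θ(p) = θ(q)`, where `θ(p)` counts boxes with left and bottom sides
identities at `p`. -/
theorem stmt7 (T : DoubleGroupoid) (p q : T.P) (D : T.B)
    (hD : T.isCoreD D) (hp : T.rt D = p) (hq : T.lt D = q) :
    T.thetaLB p = T.thetaLB q := by
  obtain ⟨hl, hb⟩ := hD
  simp only [DoubleGroupoid.left, DoubleGroupoid.bot, DoubleGroupoid.lt, DoubleGroupoid.rt,
    DoubleGroupoid.right, DoubleGroupoid.top] at hl hb hp hq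
  -- hp : T.gV.s (T.gBh.e D) = p, hq : T.gV.s (T.gBh.s D) = q
  have hlD : T.gBh.s D = T.gV.id q := by rw [hl, hq]
  have hblq : T.gH.s (T.gBv.e D) = q := by
    rw [T.corner_bl, hlD, T.gV.e_id]
  have hrq : T.gV.e (T.gBh.e D) = q := by
    have h2 := T.corner_br D
    rw [hb, T.gH.e_id, hblq] at h2
    exact h2.symm
  have hbD : T.gBv.e D = T.gH.id q := by rw [hb, hblq]
  -- the identity box X4 := gBh.id (gBh.e D)
  have htX4 : T.gBv.s (T.gBh.id (T.gBh.e D)) = T.gH.id p := by rw [T.t_idh, hp]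
  have hbX4 : T.gBv.e (T.gBh.id (T.gBh.e D)) = T.gH.id q := by rw [T.b_idh, hrq]
  have hlX4 : T.gBh.s (T.gBh.id (T.gBh.e D)) = T.gBh.e D := T.gBh.s_id _
  -- the forward and backward maps
  set X4 : T.B := T.gBh.id (T.gBh.e D) with hX4
  set F : T.B → T.B := fun U => T.gBh.comp D (T.gBv.comp U X4) with hF
  set G : T.B → T.B :=
    fun V => T.gBv.comp (T.gBh.comp (T.gBh.inv D) V) (T.gBv.inv X4) with hG
  -- composability for the forward map
  have hc1 : ∀ U : T.B, T.gBv.e U = T.gH.id p → T.gBv.e U = T.gBv.s X4 :=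
    fun U h => by rw [h, htX4]
  have hWleft : ∀ U : T.B, T.gBh.s U = T.gV.id p → T.gBv.e U = T.gH.id p →
      T.gBh.s (T.gBv.comp U X4) = T.gBh.e D := by
    intro U h1 h2
    rw [T.l_vcomp U X4 (hc1 U h2), h1, hlX4]
    have := T.gV.id_comp (T.gBh.e D)
    rwa [hp] at this
  have hFleft : ∀ U : T.B, T.gBh.s U = T.gV.id p → T.gBv.e U = T.gH.id p →
      T.gBh.s (F U) = T.gV.id q := by
    intro U h1 h2
    show T.gBh.s (T.gBh.comp D (T.gBv.comp U X4)) = T.gV.id q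
    rw [T.gBh.s_comp D _ (hWleft U h1 h2).symm, hlD]
  have hFbot : ∀ U : T.B, T.gBh.s U = T.gV.id p → T.gBv.e U = T.gH.id p →
      T.gBv.e (F U) = T.gH.id q := by
    intro U h1 h2
    show T.gBv.e (T.gBh.comp D (T.gBv.comp U X4)) = T.gH.id q
    rw [T.b_hcomp D _ (hWleft U h1 h2).symm, T.gBv.e_comp U X4 (hc1 U h2), hbX4, hbD,
      T.gH.id_comp_id]
  -- composability for the backward map
  have hcV : ∀ V : T.B, T.gBh.s V = T.gV.id q → T.gBh.e (T.gBh.inv D) = T.gBh.s V :=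
    fun V h1 => by rw [T.gBh.e_inv, hlD, h1]
  have botW1 : ∀ V : T.B, T.gBh.s V = T.gV.id q → T.gBv.e V = T.gH.id q →
      T.gBv.e (T.gBh.comp (T.gBh.inv D) V) = T.gH.id q := by
    intro V h1 h2
    rw [T.b_hcomp _ _ (hcV V h1), T.b_hinv, hbD, h2, T.gH.inv_id, T.gH.id_comp_id]
  have hcW1 : ∀ V : T.B, T.gBh.s V = T.gV.id q → T.gBv.e V = T.gH.id q →
      T.gBv.e (T.gBh.comp (T.gBh.inv D) V) = T.gBv.s (T.gBv.inv X4) := by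
    intro V h1 h2
    rw [T.gBv.s_inv, hbX4, botW1 V h1 h2]
  have hGleft : ∀ V : T.B, T.gBh.s V = T.gV.id q → T.gBv.e V = T.gH.id q →
      T.gBh.s (G V) = T.gV.id p := by
    intro V h1 h2
    show T.gBh.s (T.gBv.comp (T.gBh.comp (T.gBh.inv D) V) (T.gBv.inv X4)) = T.gV.id p
    rw [T.l_vcomp _ _ (hcW1 V h1 h2), T.l_vinv,
      T.gBh.s_comp (T.gBh.inv D) V (hcV V h1), T.gBh.s_inv, hlX4, T.gV.comp_inv, hp]
  have hGbot : ∀ V : T.B, T.gBh.s V = T.gV.id q → T.gBv.e V = T.gH.id q →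
      T.gBv.e (G V) = T.gH.id p := by
    intro V h1 h2
    show T.gBv.e (T.gBv.comp (T.gBh.comp (T.gBh.inv D) V) (T.gBv.inv X4)) = T.gH.id p
    rw [T.gBv.e_comp _ _ (hcW1 V h1 h2), T.gBv.e_inv, htX4]
  -- round trips
  have hGF : ∀ U : T.B, T.gBh.s U = T.gV.id p → T.gBv.e U = T.gH.id p → G (F U) = U := by
    intro U h1 h2
    show T.gBv.comp (T.gBh.comp (T.gBh.inv D) (T.gBh.comp D (T.gBv.comp U X4)))
      (T.gBv.inv X4) = U
    rw [T.gBh.cancel_left D _ (hWleft U h1 h2).symm, T.gBv.cancel_right U X4 (hc1 U h2)]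
  have hFG : ∀ V : T.B, T.gBh.s V = T.gV.id q → T.gBv.e V = T.gH.id q → F (G V) = V := by
    intro V h1 h2
    show T.gBh.comp D (T.gBv.comp
      (T.gBv.comp (T.gBh.comp (T.gBh.inv D) V) (T.gBv.inv X4)) X4) = V
    rw [T.gBv.cancel_right' _ X4 (by rw [botW1 V h1 h2, hbX4]),
      T.gBh.cancel_left' D V (by rw [hlD, h1])]
  unfold DoubleGroupoid.thetaLB
  apply Nat.card_congr
  exact
    { toFun := fun U => ⟨F U.1, hFleft U.1 U.2.1 U.2.2, hFbot U.1 U.2.1 U.2.2⟩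
      invFun := fun V => ⟨G V.1, hGleft V.1 V.2.1 V.2.2, hGbot V.1 V.2.1 V.2.2⟩
      left_inv := fun U => Subtype.ext (hGF U.1 U.2.1 U.2.2)
      right_inv := fun V => Subtype.ext (hFG V.1 V.2.1 V.2.2) }
end

section
/- A finite double groupoid T is vacant (i.e., for every compatible pair (g,x) ∈ V ×_{t,r} H there is exactly one box with top x and right side g) if and only if for all boxes A, B, X, Y with XY = (A over B) there exist unique boxes U, V, R, S with UV = A, RS = B, U over R = X, V over S = Y. -/
/-- vacancy: each compatible pair (top, right side) bounds exactly one box. -/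
def DoubleGroupoid.Vacant (T : DoubleGroupoid) : Prop :=
  ∀ (g : T.V) (x : T.H), T.gH.e x = T.gV.s g →
    ∃! A : T.B, T.top A = x ∧ T.right A = g


namespace Gpd

variable {P A : Type} (G : Gpd P A)

theorem inv_unique {a b : A} (h : G.e a = G.s b) (hc : G.comp a b = G.id (G.s a)) :
    b = G.inv a := by
  calc b = G.comp (G.id (G.s b)) b := (G.id_comp b).symm
    _ = G.comp (G.id (G.e a)) b := by rw [h]
    _ = G.comp (G.comp (G.inv a) a) b := by rw [G.inv_comp]
    _ = G.comp (G.inv a) (G.comp a b) := G.comp_assoc _ _ _ (G.e_inv a) h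
    _ = G.comp (G.inv a) (G.id (G.s a)) := by rw [hc]
    _ = G.comp (G.inv a) (G.id (G.e (G.inv a))) := by rw [G.e_inv]
    _ = G.inv a := G.comp_id _

theorem inv_inv (a : A) : G.inv (G.inv a) = a := by
  refine (G.inv_unique (G.e_inv a) ?_).symm
  rw [G.inv_comp, G.s_inv]

theorem left_cancel {a b : A} (h : G.e a = G.s b) :
    G.comp (G.inv a) (G.comp a b) = b := by
  rw [← G.comp_assoc _ _ _ (G.e_inv a) h, G.inv_comp, h, G.id_comp]

theorem left_cancel' {a b : A} (h : G.s a = G.s b) :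
    G.comp a (G.comp (G.inv a) b) = b := by
  rw [← G.comp_assoc _ _ _ (G.s_inv a).symm (by rw [G.e_inv, h]), G.comp_inv, h, G.id_comp]

theorem right_cancel {a b : A} (h : G.e a = G.e b) :
    G.comp (G.comp a (G.inv b)) b = a := by
  rw [G.comp_assoc a (G.inv b) b (by rw [G.s_inv, h]) (G.e_inv b), G.inv_comp, ← h, G.comp_id]

theorem inv_comp' {a b : A} (h : G.e a = G.s b) :
    G.inv (G.comp a b) = G.comp (G.inv b) (G.inv a) := by
  have hsba : G.e (G.inv b) = G.s (G.inv a) := by rw [G.e_inv, G.s_inv, h]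
  refine (G.inv_unique ?_ ?_).symm
  · rw [G.e_comp a b h, G.s_comp _ _ hsba, G.s_inv]
  · rw [G.s_comp a b h,
      G.comp_assoc a b _ h (by rw [G.s_comp _ _ hsba, G.s_inv]),
      ← G.comp_assoc b (G.inv b) (G.inv a) (G.s_inv b).symm (by rw [G.e_inv, G.s_inv, h]),
      G.comp_inv, ← h, ← G.s_inv a, G.id_comp, G.comp_inv]

end Gpd

namespace DoubleGroupoid

variable (T : DoubleGroupoid)

/-- the vertical inverse of a horizontal composite -/
theorem vinv_hcomp {U V : T.B} (h : T.gBh.e U = T.gBh.s V) :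
    T.gBv.inv (T.gBh.comp U V) = T.gBh.comp (T.gBv.inv U) (T.gBv.inv V) := by
  have hinv : T.gBh.e (T.gBv.inv U) = T.gBh.s (T.gBv.inv V) := by
    rw [T.r_vinv, T.l_vinv, h]
  refine (T.gBv.inv_unique ?_ ?_).symm
  · rw [T.b_hcomp U V h, T.t_hcomp _ _ hinv, T.gBv.s_inv, T.gBv.s_inv]
  · rw [T.interchange U V (T.gBv.inv U) (T.gBv.inv V) h hinv
        (T.gBv.s_inv U).symm (T.gBv.s_inv V).symm,
      T.gBv.comp_inv, T.gBv.comp_inv,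
      T.idv_hcomp _ _ (by rw [T.corner_tr, T.corner_tl, h]),
      T.t_hcomp U V h]

/-- vacancy in the (top, left) form -/
theorem vacant_tl (hv : T.Vacant) (g : T.V) (x : T.H) (h : T.gH.s x = T.gV.s g) :
    ∃! U : T.B, T.gBv.s U = x ∧ T.gBh.s U = g := by
  simp only [Vacant, top, right] at hv
  obtain ⟨W, ⟨hWt, hWr⟩, hWu⟩ := hv g (T.gH.inv x) (by rw [T.gH.e_inv, h])
  refine ⟨T.gBh.inv W, ⟨?_, ?_⟩, ?_⟩
  · rw [T.t_hinv, hWt, T.gH.inv_inv]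
  · rw [T.gBh.s_inv, hWr]
  · rintro U' ⟨hU't, hU'l⟩
    have : T.gBh.inv U' = W := by
      refine hWu _ ⟨?_, ?_⟩
      · rw [T.t_hinv, hU't]
      · rw [T.gBh.e_inv, hU'l]
    rw [← this, T.gBh.inv_inv]

/-- the factorization condition on a quadruple -/
def Cond (A B X Y : T.B) (q : T.B × T.B × T.B × T.B) : Prop :=
  T.right q.1 = T.left q.2.1 ∧ T.right q.2.2.1 = T.left q.2.2.2 ∧
  T.bot q.1 = T.top q.2.2.1 ∧ T.bot q.2.1 = T.top q.2.2.2 ∧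
  T.hcomp q.1 q.2.1 = A ∧ T.hcomp q.2.2.1 q.2.2.2 = B ∧
  T.vcomp q.1 q.2.2.1 = X ∧ T.vcomp q.2.1 q.2.2.2 = Y

/-- the quadruple determined by its upper-left box -/
def quad (A X Y U : T.B) : T.B × T.B × T.B × T.B :=
  (U, T.gBh.comp (T.gBh.inv U) A, T.gBv.comp (T.gBv.inv U) X,
   T.gBv.comp (T.gBv.inv (T.gBh.comp (T.gBh.inv U) A)) Y)

theorem cond_quad (A B X Y U : T.B)
    (hXYc : T.gBh.e X = T.gBh.s Y) (hABc : T.gBv.e A = T.gBv.s B)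
    (hbig : T.gBh.comp X Y = T.gBv.comp A B)
    (hUt : T.gBv.s U = T.gBv.s X) (hUl : T.gBh.s U = T.gBh.s A) :
    T.Cond A B X Y (T.quad A X Y U) := by
  set V := T.gBh.comp (T.gBh.inv U) A with hV
  set R := T.gBv.comp (T.gBv.inv U) X with hR
  have cUA : T.gBh.e (T.gBh.inv U) = T.gBh.s A := by rw [T.gBh.e_inv, hUl]
  have cUX : T.gBv.e (T.gBv.inv U) = T.gBv.s X := by rw [T.gBv.e_inv, hUt]
  have topXY : T.gH.e (T.gBv.s X) = T.gH.s (T.gBv.s Y) := by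
    rw [T.corner_tr, T.corner_tl, hXYc]
  have topA : T.gBv.s A = T.gH.comp (T.gBv.s X) (T.gBv.s Y) := by
    have h := congrArg T.gBv.s hbig
    rw [T.t_hcomp X Y hXYc, T.gBv.s_comp A B hABc] at h
    exact h.symm
  have hVt : T.gBv.s V = T.gBv.s Y := by
    rw [hV, T.t_hcomp _ _ cUA, T.t_hinv, hUt, topA]
    exact T.gH.left_cancel topXY
  have cVY : T.gBv.e (T.gBv.inv V) = T.gBv.s Y := by rw [T.gBv.e_inv, hVt]
  set S := T.gBv.comp (T.gBv.inv V) Y with hS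
  have h1 : T.gBh.e U = T.gBh.s V := by
    rw [hV, T.gBh.s_comp _ _ cUA, T.gBh.s_inv]
  have h5 : T.gBh.comp U V = A := T.gBh.left_cancel' hUl
  have h7 : T.gBv.comp U R = X := T.gBv.left_cancel' hUt
  have h8 : T.gBv.comp V S = Y := T.gBv.left_cancel' hVt
  have hinvUV : T.gBh.e (T.gBv.inv U) = T.gBh.s (T.gBv.inv V) := by
    rw [T.r_vinv, T.l_vinv, h1]
  refine ⟨h1, ?_, ?_, ?_, h5, ?_, h7, h8⟩
  · show T.gBh.e R = T.gBh.s S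
    rw [hR, hS, T.r_vcomp _ _ cUX, T.l_vcomp _ _ cVY, T.r_vinv, T.l_vinv, h1, hXYc]
  · show T.gBv.e U = T.gBv.s R
    rw [hR, T.gBv.s_comp _ _ cUX, T.gBv.s_inv]
  · show T.gBv.e V = T.gBv.s S
    rw [hS, T.gBv.s_comp _ _ cVY, T.gBv.s_inv]
  · show T.gBh.comp R S = B
    rw [hR, hS, ← T.interchange _ _ X Y hinvUV hXYc cUX cVY,
      ← T.vinv_hcomp h1, h5, hbig]
    exact T.gBv.left_cancel hABc

theorem cond_eq (A B X Y : T.B) (q : T.B × T.B × T.B × T.B)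
    (hq : T.Cond A B X Y q) :
    q = T.quad A X Y q.1 ∧ T.gBv.s q.1 = T.gBv.s X ∧ T.gBh.s q.1 = T.gBh.s A := by
  obtain ⟨h1, h2, h3, h4, h5, h6, h7, h8⟩ := hq
  have hUt : T.gBv.s q.1 = T.gBv.s X := by
    have := congrArg T.gBv.s h7
    rwa [show T.vcomp q.1 q.2.2.1 = T.gBv.comp q.1 q.2.2.1 from rfl,
      T.gBv.s_comp _ _ h3] at this
  have hUl : T.gBh.s q.1 = T.gBh.s A := by
    have := congrArg T.gBh.s h5
    rwa [show T.hcomp q.1 q.2.1 = T.gBh.comp q.1 q.2.1 from rfl,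
      T.gBh.s_comp _ _ h1] at this
  refine ⟨?_, hUt, hUl⟩
  have hVeq : q.2.1 = T.gBh.comp (T.gBh.inv q.1) A := by
    rw [← h5]; exact (T.gBh.left_cancel h1).symm
  have hReq : q.2.2.1 = T.gBv.comp (T.gBv.inv q.1) X := by
    rw [← h7]; exact (T.gBv.left_cancel h3).symm
  have hSeq : q.2.2.2 = T.gBv.comp (T.gBv.inv q.2.1) Y := by
    rw [← h8]; exact (T.gBv.left_cancel h4).symm
  show q = _
  rw [quad, ← hVeq, ← hReq, ← hSeq]

end DoubleGroupoid

/-- `T` is vacant iff every common product `XY = (A over B)` admits a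
unique double factorization `(U,V,R,S)`. -/
theorem stmt9 (T : DoubleGroupoid) :
    T.Vacant ↔
      ∀ A B X Y : T.B, T.right X = T.left Y → T.bot A = T.top B →
        T.hcomp X Y = T.vcomp A B →
        ∃! q : T.B × T.B × T.B × T.B,
          T.right q.1 = T.left q.2.1 ∧ T.right q.2.2.1 = T.left q.2.2.2 ∧
          T.bot q.1 = T.top q.2.2.1 ∧ T.bot q.2.1 = T.top q.2.2.2 ∧
          T.hcomp q.1 q.2.1 = A ∧ T.hcomp q.2.2.1 q.2.2.2 = B ∧
          T.vcomp q.1 q.2.2.1 = X ∧ T.vcomp q.2.1 q.2.2.2 = Y := by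
  constructor
  · -- Vacant → factorization
    intro hv A B X Y hXY hAB hbig
    have hXYc : T.gBh.e X = T.gBh.s Y := hXY
    have hABc : T.gBv.e A = T.gBv.s B := hAB
    have hbig' : T.gBh.comp X Y = T.gBv.comp A B := hbig
    have hlcompat : T.gV.e (T.gBh.s A) = T.gV.s (T.gBh.s B) := by
      rw [← T.corner_bl, ← T.corner_tl, hABc]
    have hleftX : T.gBh.s X = T.gV.comp (T.gBh.s A) (T.gBh.s B) := by
      have h := congrArg T.gBh.s hbig'
      rwa [T.gBh.s_comp X Y hXYc, T.l_vcomp A B hABc] at h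
    have hc : T.gH.s (T.gBv.s X) = T.gV.s (T.gBh.s A) := by
      rw [T.corner_tl X, hleftX, T.gV.s_comp _ _ hlcompat]
    obtain ⟨U, ⟨hUt, hUl⟩, hUuniq⟩ := T.vacant_tl hv (T.gBh.s A) (T.gBv.s X) hc
    refine ⟨T.quad A X Y U, T.cond_quad A B X Y U hXYc hABc hbig' hUt hUl, ?_⟩
    intro q hq
    obtain ⟨hqeq, hqt, hql⟩ := T.cond_eq A B X Y q hq
    rw [hqeq, hUuniq q.1 ⟨hqt, hql⟩]
  · -- factorization → Vacant
    intro hfac g x hxg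
    set A := T.gBh.id g with hA
    set B := T.gBh.id (T.gV.inv g) with hB
    set X := T.gBv.id (T.gH.inv x) with hX
    set Y := T.gBv.id x with hY
    have hXYc : T.gBh.e X = T.gBh.s Y := by
      rw [hX, hY, T.r_idv, T.l_idv, T.gH.e_inv]
    have hABc : T.gBv.e A = T.gBv.s B := by
      rw [hA, hB, T.b_idh, T.t_idh, T.gV.s_inv]
    have hbig : T.gBh.comp X Y = T.gBv.comp A B := by
      rw [hX, hY, hA, hB, T.idv_hcomp _ _ (by rw [T.gH.e_inv]),
        T.idh_vcomp _ _ (T.gV.s_inv g).symm, T.gH.inv_comp, T.gV.comp_inv,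
        T.id_id, hxg]
    obtain ⟨q, hq, huniq⟩ := hfac A B X Y hXYc hABc hbig
    obtain ⟨h1, h2, h3, h4, h5, h6, h7, h8⟩ := hq
    have hfill : ∀ C : T.B, T.gBv.s C = x → T.gBh.e C = g → C = q.2.1 := by
      intro C hCt hCr
      have cAC : T.gBh.e A = T.gBh.s (T.gBh.inv C) := by
        rw [hA, T.gBh.e_id, T.gBh.s_inv, hCr]
      set UC := T.gBh.comp A (T.gBh.inv C) with hUC
      have hUCl : T.gBh.s UC = T.gBh.s A := T.gBh.s_comp A (T.gBh.inv C) cAC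
      have hUCt : T.gBv.s UC = T.gBv.s X := by
        rw [hUC, T.t_hcomp _ _ cAC, T.t_hinv, hCt, hX, T.gBv.s_id, hA, T.t_idh,
          show T.gV.s g = T.gH.s (T.gH.inv x) by rw [T.gH.s_inv, hxg]]
        exact T.gH.id_comp _
      have hcond := T.cond_quad A B X Y UC hXYc hABc hbig hUCt hUCl
      have hqq := huniq (T.quad A X Y UC) hcond
      have hsnd : (T.quad A X Y UC).2.1 = C := by
        show T.gBh.comp (T.gBh.inv UC) A = C
        rw [hUC, T.gBh.inv_comp' cAC, T.gBh.inv_inv]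
        exact T.gBh.right_cancel (by rw [hCr, hA, T.gBh.e_id])
      rw [← hsnd, hqq]
    have hVt : T.gBv.s q.2.1 = x := by
      have h := congrArg T.gBv.s h8
      rwa [show T.vcomp q.2.1 q.2.2.2 = T.gBv.comp q.2.1 q.2.2.2 from rfl,
        T.gBv.s_comp _ _ h4, hY, T.gBv.s_id] at h
    have hVr : T.gBh.e q.2.1 = g := by
      have h := congrArg T.gBh.e h5
      rwa [show T.hcomp q.1 q.2.1 = T.gBh.comp q.1 q.2.1 from rfl,
        T.gBh.e_comp _ _ h1, hA, T.gBh.e_id] at h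
    refine ⟨q.2.1, ⟨hVt, hVr⟩, ?_⟩
    rintro C ⟨hCt, hCr⟩
    exact hfill C hCt hCr
end
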